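/- With Ω = [[Ω₁, Γ],[Γ†, Ω₂]] and H₁c, H₂c as in the system reconstruction theorem, the subspace H₁c ⊕ H₂c is invariant under Ω and contains the range of the off-diagonal operator Γ̊ = [[0, Γ],[Γ†, 0]]. -/

import Mathlib

/-!
Split `Ω = D + Γ̊` with `D = diag(Ω₁, Ω₂)`, which preserves `H₁` and `H₂`, while `Γ̊` swaps them.
Since `O_Ω(H₂)` contains `H₂` and is `Ω`-invariant, `Γ̊ y = Ω y - D y ∈ O_Ω(H₂) ∩ H₁ = H₁c` for
`y ∈ H₂` (using `H₂ᗮ = H₁`), and symmetrically `Γ̊ H₁ ⊆ H₂c`; as `H₁ + H₂` is everything, this is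
the claim about the range of `Γ̊`. For `x ∈ H₁c`, `Ω x = D x + Γ̊ x` where `Γ̊ x ∈ H₂c` and
`D x = Ω x - Γ̊ x ∈ O_Ω(H₂) ∩ H₁ = H₁c`; with the symmetric argument this gives invariance.
-/

open ContinuousLinearMap MeasureTheory

/-- The orbit of a set `S` under an operator `Ω`: the smallest closed `Ω`-invariant
subspace containing `S`. -/
noncomputable def orbit {H : Type*} [NormedAddCommGroup H] [InnerProductSpace ℂ H]
    (Ω : H →L[ℂ] H) (S : Set H) : Submodule ℂ H :=
  sInf {K : Submodule ℂ H | S ⊆ K ∧ IsClosed (K : Set H) ∧ ∀ x ∈ K, Ω x ∈ K}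

variable {H₁ H₂ : Type*} [NormedAddCommGroup H₁] [InnerProductSpace ℂ H₁] [CompleteSpace H₁]
  [NormedAddCommGroup H₂] [InnerProductSpace ℂ H₂] [CompleteSpace H₂]

/-- Inclusion of `H₁` into the Hilbert space direct sum `H₁ ⊕ H₂`. -/
noncomputable def inl' : H₁ →L[ℂ] WithLp 2 (H₁ × H₂) :=
  (WithLp.prodContinuousLinearEquiv 2 ℂ H₁ H₂).symm.toContinuousLinearMap ∘L
    ContinuousLinearMap.inl ℂ H₁ H₂

/-- Inclusion of `H₂` into the Hilbert space direct sum `H₁ ⊕ H₂`. -/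
noncomputable def inr' : H₂ →L[ℂ] WithLp 2 (H₁ × H₂) :=
  (WithLp.prodContinuousLinearEquiv 2 ℂ H₁ H₂).symm.toContinuousLinearMap ∘L
    ContinuousLinearMap.inr ℂ H₁ H₂

/-- The block operator `[[Ω₁, Γ], [Γ†, Ω₂]]` on `H₁ ⊕ H₂`. -/
noncomputable def blockOp (Ω₁ : H₁ →L[ℂ] H₁) (Ω₂ : H₂ →L[ℂ] H₂) (Γ : H₂ →L[ℂ] H₁) :
    WithLp 2 (H₁ × H₂) →L[ℂ] WithLp 2 (H₁ × H₂) :=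
  (WithLp.prodContinuousLinearEquiv 2 ℂ H₁ H₂).symm.toContinuousLinearMap ∘L
    ((Ω₁ ∘L ContinuousLinearMap.fst ℂ H₁ H₂ + Γ ∘L ContinuousLinearMap.snd ℂ H₁ H₂).prod
      ((ContinuousLinearMap.adjoint Γ) ∘L ContinuousLinearMap.fst ℂ H₁ H₂ +
        Ω₂ ∘L ContinuousLinearMap.snd ℂ H₁ H₂)) ∘L
    (WithLp.prodContinuousLinearEquiv 2 ℂ H₁ H₂).toContinuousLinearMap

/-- `H₁` as a subspace of `H₁ ⊕ H₂`. -/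
noncomputable def sub1 : Submodule ℂ (WithLp 2 (H₁ × H₂)) := LinearMap.range ((inl' : H₁ →L[ℂ] WithLp 2 (H₁ × H₂)) : H₁ →ₗ[ℂ] _)

/-- `H₂` as a subspace of `H₁ ⊕ H₂`. -/
noncomputable def sub2 : Submodule ℂ (WithLp 2 (H₁ × H₂)) := LinearMap.range ((inr' : H₂ →L[ℂ] WithLp 2 (H₁ × H₂)) : H₂ →ₗ[ℂ] _)

set_option linter.unusedSectionVars false

section BlockDecomposition

variable {R M F : Type*} [Ring R] [AddCommGroup M] [Module R M] [FunLike F M M]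
  {Ω D C : F} {P Q K K' : Submodule R M}

theorem coupling_mem_inf (hΩ : ∀ x, Ω x = D x + C x) (hQK : Q ≤ K) (hK : Set.MapsTo Ω K K)
    (hDQ : Set.MapsTo D Q Q) (hCQ : Set.MapsTo C Q P) {x : M} (hx : x ∈ Q) :
    C x ∈ K ⊓ P := by
  have hCx : C x = Ω x - D x := by rw [hΩ]; abel
  refine ⟨?_, hCQ hx⟩
  rw [hCx]
  exact K.sub_mem (hK (hQK hx)) (hQK (hDQ hx))

theorem diagonal_mem_inf (hΩ : ∀ x, Ω x = D x + C x) (hQK : Q ≤ K) (hK : Set.MapsTo Ω K K)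
    (hDP : Set.MapsTo D P P) (hCP : Set.MapsTo C P Q) {x : M} (hx : x ∈ K ⊓ P) :
    D x ∈ K ⊓ P := by
  have hDx : D x = Ω x - C x := by rw [hΩ]; abel
  refine ⟨?_, hDP hx.2⟩
  rw [hDx]
  exact K.sub_mem (hK hx.1) (hQK (hCP hx.2))

theorem map_mem_sup_of_mem_inf (hΩ : ∀ x, Ω x = D x + C x)
    (hPK' : P ≤ K') (hK' : Set.MapsTo Ω K' K') (hQK : Q ≤ K) (hK : Set.MapsTo Ω K K)
    (hDP : Set.MapsTo D P P) (hCP : Set.MapsTo C P Q) {x : M} (hx : x ∈ K ⊓ P) :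
    Ω x ∈ K ⊓ P ⊔ K' ⊓ Q := by
  rw [hΩ]
  exact add_mem (Submodule.mem_sup_left (diagonal_mem_inf hΩ hQK hK hDP hCP hx))
    (Submodule.mem_sup_right (coupling_mem_inf hΩ hPK' hK' hDP hCP hx.2))

theorem mapsTo_sup_inf [AddHomClass F M M] (hΩ : ∀ x, Ω x = D x + C x)
    (hPK' : P ≤ K') (hK' : Set.MapsTo Ω K' K') (hQK : Q ≤ K) (hK : Set.MapsTo Ω K K)
    (hDP : Set.MapsTo D P P) (hDQ : Set.MapsTo D Q Q)
    (hCP : Set.MapsTo C P Q) (hCQ : Set.MapsTo C Q P) :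
    Set.MapsTo Ω (K ⊓ P ⊔ K' ⊓ Q : Submodule R M) (K ⊓ P ⊔ K' ⊓ Q : Submodule R M) := by
  intro x hx
  obtain ⟨y, hy, z, hz, rfl⟩ := Submodule.mem_sup.1 hx
  rw [map_add]
  refine add_mem (map_mem_sup_of_mem_inf hΩ hPK' hK' hQK hK hDP hCP hy) ?_
  rw [sup_comm]
  exact map_mem_sup_of_mem_inf hΩ hQK hK hPK' hK' hDQ hCQ hz

theorem range_subset_sup_inf [AddHomClass F M M] (hΩ : ∀ x, Ω x = D x + C x)
    (hPK' : P ≤ K') (hK' : Set.MapsTo Ω K' K') (hQK : Q ≤ K) (hK : Set.MapsTo Ω K K)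
    (hDP : Set.MapsTo D P P) (hDQ : Set.MapsTo D Q Q)
    (hCP : Set.MapsTo C P Q) (hCQ : Set.MapsTo C Q P) (hPQ : P ⊔ Q = ⊤) :
    Set.range C ⊆ (K ⊓ P ⊔ K' ⊓ Q : Submodule R M) := by
  rintro _ ⟨x, rfl⟩
  obtain ⟨y, hy, z, hz, rfl⟩ := Submodule.mem_sup.1 (hPQ ▸ Submodule.mem_top : x ∈ P ⊔ Q)
  rw [map_add]
  exact add_mem (Submodule.mem_sup_right (coupling_mem_inf hΩ hPK' hK' hDP hCP hy))
    (Submodule.mem_sup_left (coupling_mem_inf hΩ hQK hK hDQ hCQ hz))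

end BlockDecomposition

section Orbit

variable {H : Type*} [NormedAddCommGroup H] [InnerProductSpace ℂ H]

theorem subset_orbit (Ω : H →L[ℂ] H) (S : Set H) : S ⊆ orbit Ω S :=
  fun _ hx => Submodule.mem_sInf.2 fun _ hK => hK.1 hx

theorem mapsTo_orbit (Ω : H →L[ℂ] H) (S : Set H) : Set.MapsTo Ω (orbit Ω S) (orbit Ω S) :=
  fun x hx => Submodule.mem_sInf.2 fun K hK => hK.2.2 x (Submodule.mem_sInf.1 hx K hK)

end Orbit

theorem WithLp.prod_ext {α β : Type*} {p q : WithLp 2 (α × β)} (h₁ : p.fst = q.fst)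
    (h₂ : p.snd = q.snd) : p = q :=
  WithLp.ofLp_injective 2 (Prod.ext h₁ h₂)

theorem mem_sub1_iff {p : WithLp 2 (H₁ × H₂)} :
    p ∈ (sub1 : Submodule ℂ (WithLp 2 (H₁ × H₂))) ↔ p.snd = 0 :=
  ⟨by rintro ⟨x, rfl⟩; rfl, fun h => ⟨p.fst, WithLp.prod_ext rfl h.symm⟩⟩

theorem mem_sub2_iff {p : WithLp 2 (H₁ × H₂)} :
    p ∈ (sub2 : Submodule ℂ (WithLp 2 (H₁ × H₂))) ↔ p.fst = 0 :=
  ⟨by rintro ⟨y, rfl⟩; rfl, fun h => ⟨p.snd, WithLp.prod_ext h.symm rfl⟩⟩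

theorem orthogonal_sub1 : (sub1 : Submodule ℂ (WithLp 2 (H₁ × H₂)))ᗮ = sub2 := by
  ext p
  simp only [mem_sub2_iff, Submodule.mem_orthogonal, sub1, LinearMap.mem_range,
    forall_exists_index, forall_apply_eq_imp_iff]
  exact ⟨fun h => by simpa [inl'] using h p.fst, fun h x => by simp [inl', h]⟩

theorem orthogonal_sub2 : (sub2 : Submodule ℂ (WithLp 2 (H₁ × H₂)))ᗮ = sub1 := by
  ext p
  simp only [mem_sub1_iff, Submodule.mem_orthogonal, sub2, LinearMap.mem_range,
    forall_exists_index, forall_apply_eq_imp_iff]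
  exact ⟨fun h => by simpa [inr'] using h p.snd, fun h y => by simp [inr', h]⟩

theorem inl'_add_inr' (p : WithLp 2 (H₁ × H₂)) : inl' p.fst + inr' p.snd = p :=
  WithLp.prod_ext (by simp [inl', inr']) (by simp [inl', inr'])

theorem sub1_sup_sub2 : (sub1 : Submodule ℂ (WithLp 2 (H₁ × H₂))) ⊔ sub2 = ⊤ :=
  eq_top_iff.2 fun p _ => inl'_add_inr' p ▸ Submodule.add_mem_sup ⟨p.fst, rfl⟩ ⟨p.snd, rfl⟩

theorem blockOp_inl' (Ω₁ : H₁ →L[ℂ] H₁) (Ω₂ : H₂ →L[ℂ] H₂) (Γ : H₂ →L[ℂ] H₁) (x : H₁) :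
    blockOp Ω₁ Ω₂ Γ (inl' x) = inl' (Ω₁ x) + inr' (adjoint Γ x) :=
  WithLp.prod_ext (by simp [blockOp, inl', inr']) (by simp [blockOp, inl', inr'])

theorem blockOp_inr' (Ω₁ : H₁ →L[ℂ] H₁) (Ω₂ : H₂ →L[ℂ] H₂) (Γ : H₂ →L[ℂ] H₁) (y : H₂) :
    blockOp Ω₁ Ω₂ Γ (inr' y) = inl' (Γ y) + inr' (Ω₂ y) :=
  WithLp.prod_ext (by simp [blockOp, inl', inr']) (by simp [blockOp, inl', inr'])

theorem blockOp_apply_eq_add (Ω₁ : H₁ →L[ℂ] H₁) (Ω₂ : H₂ →L[ℂ] H₂) (Γ : H₂ →L[ℂ] H₁)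
    (p : WithLp 2 (H₁ × H₂)) :
    blockOp Ω₁ Ω₂ Γ p = blockOp Ω₁ Ω₂ 0 p + blockOp 0 0 Γ p :=
  WithLp.prod_ext (by simp [blockOp]) (by simp [blockOp]; abel)

theorem blockOp_diag_mapsTo_sub1 (Ω₁ : H₁ →L[ℂ] H₁) (Ω₂ : H₂ →L[ℂ] H₂) :
    Set.MapsTo (blockOp Ω₁ Ω₂ 0) (sub1 (H₁ := H₁) (H₂ := H₂)) (sub1 (H₁ := H₁) (H₂ := H₂)) := by
  rintro _ ⟨x, rfl⟩
  exact ⟨Ω₁ x, by simp [blockOp_inl']⟩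

theorem blockOp_diag_mapsTo_sub2 (Ω₁ : H₁ →L[ℂ] H₁) (Ω₂ : H₂ →L[ℂ] H₂) :
    Set.MapsTo (blockOp Ω₁ Ω₂ 0) (sub2 (H₁ := H₁) (H₂ := H₂)) (sub2 (H₁ := H₁) (H₂ := H₂)) := by
  rintro _ ⟨y, rfl⟩
  exact ⟨Ω₂ y, by simp [blockOp_inr']⟩

theorem blockOp_offDiag_mapsTo_sub1 (Γ : H₂ →L[ℂ] H₁) :
    Set.MapsTo (blockOp 0 0 Γ) (sub1 (H₁ := H₁) (H₂ := H₂)) (sub2 (H₁ := H₁) (H₂ := H₂)) := by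
  rintro _ ⟨x, rfl⟩
  exact ⟨adjoint Γ x, by simp [blockOp_inl']⟩

theorem blockOp_offDiag_mapsTo_sub2 (Γ : H₂ →L[ℂ] H₁) :
    Set.MapsTo (blockOp 0 0 Γ) (sub2 (H₁ := H₁) (H₂ := H₂)) (sub1 (H₁ := H₁) (H₂ := H₂)) := by
  rintro _ ⟨y, rfl⟩
  exact ⟨Γ y, by simp [blockOp_inr']⟩

theorem coupled_invariant_contains_coupling_general
    (Ω₁ : H₁ →L[ℂ] H₁) (Ω₂ : H₂ →L[ℂ] H₂) (Γ : H₂ →L[ℂ] H₁)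
    (Ω Γ' : WithLp 2 (H₁ × H₂) →L[ℂ] WithLp 2 (H₁ × H₂)) (hΩ : Ω = blockOp Ω₁ Ω₂ Γ)
    (hΓ' : Γ' = blockOp 0 0 Γ)
    (H2c H1c : Submodule ℂ (WithLp 2 (H₁ × H₂)))
    (hH2c : H2c = orbit Ω (sub1 : Submodule ℂ (WithLp 2 (H₁ × H₂))) ⊓
      (sub1 : Submodule ℂ (WithLp 2 (H₁ × H₂)))ᗮ)
    (hH1c : H1c = orbit Ω (sub2 : Submodule ℂ (WithLp 2 (H₁ × H₂))) ⊓
      (sub2 : Submodule ℂ (WithLp 2 (H₁ × H₂)))ᗮ) :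
    (∀ x ∈ H1c ⊔ H2c, Ω x ∈ H1c ⊔ H2c) ∧
    Set.range Γ' ⊆ (H1c ⊔ H2c : Submodule ℂ (WithLp 2 (H₁ × H₂))) := by
  subst hΩ hΓ' hH2c hH1c
  rw [orthogonal_sub1, orthogonal_sub2]
  have hΩ := blockOp_apply_eq_add Ω₁ Ω₂ Γ
  have hK₁ := subset_orbit (blockOp Ω₁ Ω₂ Γ) (sub1 (H₁ := H₁) (H₂ := H₂))
  have hK₂ := subset_orbit (blockOp Ω₁ Ω₂ Γ) (sub2 (H₁ := H₁) (H₂ := H₂))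
  have hD₁ := blockOp_diag_mapsTo_sub1 Ω₁ Ω₂
  have hD₂ := blockOp_diag_mapsTo_sub2 Ω₁ Ω₂
  have hC₁ := blockOp_offDiag_mapsTo_sub1 Γ
  have hC₂ := blockOp_offDiag_mapsTo_sub2 Γ
  exact ⟨mapsTo_sup_inf hΩ hK₁ (mapsTo_orbit _ _) hK₂ (mapsTo_orbit _ _) hD₁ hD₂ hC₁ hC₂,
    range_subset_sup_inf hΩ hK₁ (mapsTo_orbit _ _) hK₂ (mapsTo_orbit _ _) hD₁ hD₂ hC₁ hC₂
      sub1_sup_sub2⟩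

/-- `H₁c ⊕ H₂c` is invariant under `Ω` and contains the range of the
off-diagonal coupling operator `Γ̊ = [[0, Γ], [Γ†, 0]]`. -/
theorem coupled_invariant_contains_coupling
    (Ω₁ : H₁ →L[ℂ] H₁) (Ω₂ : H₂ →L[ℂ] H₂) (Γ : H₂ →L[ℂ] H₁)
    (hΩ₁ : IsSelfAdjoint Ω₁) (hΩ₂ : IsSelfAdjoint Ω₂)
    (Ω Γ' : WithLp 2 (H₁ × H₂) →L[ℂ] WithLp 2 (H₁ × H₂)) (hΩ : Ω = blockOp Ω₁ Ω₂ Γ)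
    (hΓ' : Γ' = blockOp 0 0 Γ)
    (H2c H1c : Submodule ℂ (WithLp 2 (H₁ × H₂)))
    (hH2c : H2c = orbit Ω (sub1 : Submodule ℂ (WithLp 2 (H₁ × H₂))) ⊓
      (sub1 : Submodule ℂ (WithLp 2 (H₁ × H₂)))ᗮ)
    (hH1c : H1c = orbit Ω (sub2 : Submodule ℂ (WithLp 2 (H₁ × H₂))) ⊓
      (sub2 : Submodule ℂ (WithLp 2 (H₁ × H₂)))ᗮ) :
    (∀ x ∈ H1c ⊔ H2c, Ω x ∈ H1c ⊔ H2c) ∧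
    Set.range Γ' ⊆ (H1c ⊔ H2c : Submodule ℂ (WithLp 2 (H₁ × H₂))) :=
  coupled_invariant_contains_coupling_general Ω₁ Ω₂ Γ Ω Γ' hΩ hΓ' H2c H1c hH2c hH1c
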